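/- For n = 2^k with k ∈ ℕ, any a > 0, and any y > 0, the L_n-transform of x ↦ erf(a^{n/2} x^{n/2}) satisfies ∫₀^∞ x^{n−1} exp(−x^n y^n) erf(a^{n/2} x^{n/2}) dx = (1/n) a^{n/2} y^{−n} (y^n + a^n)^{−1/2}, where erf(t) = (2/√π) ∫_0^t exp(−u²) du. -/

import Mathlib

/-!
Substituting `t = xⁿ` turns the transform into `1/n` times the Laplace transform
`∫₀^∞ e^{-st} erf(b√t) dt` with `s = yⁿ` and `b = a^{n/2}`. For that Laplace transform,
`-e^{-st} erf(b√t) / s` is an antiderivative of `e^{-st} erf(b√t) - b/(s√π) · t^{-1/2} e^{-(s+b²)t}`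
vanishing at `0` and at `∞`, so it equals the integral of the second term, a Gamma integral at `1/2`
whose value is `b / (s √(s + b²))`.
-/

open MeasureTheory Set

noncomputable def erf (t : ℝ) : ℝ :=
  (2 / Real.sqrt Real.pi) * ∫ u in (0 : ℝ)..t, Real.exp (-u ^ 2)

open Real Filter Topology

lemma erf_zero : erf 0 = 0 := by simp [erf]

lemma erf_neg (t : ℝ) : erf (-t) = -erf t := by
  have h := intervalIntegral.integral_comp_neg (a := 0) (b := t) fun u : ℝ => exp (-u ^ 2)
  simp only [even_two, Even.neg_pow, neg_zero] at h
  rw [erf, erf, h, intervalIntegral.integral_symm, mul_neg]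

lemma erf_nonneg {t : ℝ} (ht : 0 ≤ t) : 0 ≤ erf t := by
  have : 0 ≤ ∫ u in (0 : ℝ)..t, exp (-u ^ 2) :=
    intervalIntegral.integral_nonneg ht fun u _ => (exp_pos _).le
  unfold erf
  positivity

lemma erf_le_one (t : ℝ) : erf t ≤ 1 := by
  rcases le_total 0 t with ht | ht
  · have hint : IntegrableOn (fun u : ℝ => exp (-u ^ 2)) (Ioi 0) := by
      simpa using (integrable_exp_neg_mul_sq one_pos).integrableOn
    have hle : ∫ u in (0 : ℝ)..t, exp (-u ^ 2) ≤ √π / 2 := by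
      rw [intervalIntegral.integral_of_le ht]
      calc ∫ u in Ioc 0 t, exp (-u ^ 2) ≤ ∫ u in Ioi 0, exp (-u ^ 2) :=
            setIntegral_mono_set hint (Filter.Eventually.of_forall fun u => (exp_pos _).le)
              Ioc_subset_Ioi_self.eventuallyLE
        _ = √π / 2 := by simpa using integral_gaussian_Ioi 1
    have hpi : 0 < √π := sqrt_pos.2 pi_pos
    calc erf t ≤ 2 / √π * (√π / 2) := mul_le_mul_of_nonneg_left hle (by positivity)
      _ = 1 := by field_simp
  · linarith [erf_nonneg (neg_nonneg.2 ht), erf_neg t]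

lemma abs_erf_le_one (t : ℝ) : |erf t| ≤ 1 :=
  abs_le.2 ⟨by linarith [erf_le_one (-t), erf_neg t], erf_le_one t⟩

lemma hasDerivAt_erf (t : ℝ) : HasDerivAt erf (2 / √π * exp (-t ^ 2)) t := by
  have hcont : Continuous fun u : ℝ => exp (-u ^ 2) := by fun_prop
  exact (intervalIntegral.integral_hasDerivAt_right (hcont.intervalIntegrable _ _)
    (hcont.stronglyMeasurableAtFilter _ _) hcont.continuousAt).const_mul _

@[fun_prop]
lemma continuous_erf : Continuous erf :=
  continuous_iff_continuousAt.2 fun t => (hasDerivAt_erf t).continuousAt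

lemma hasDerivAt_erf_mul_sqrt (b : ℝ) {t : ℝ} (ht : 0 < t) :
    HasDerivAt (fun t => erf (b * √t)) (b / √π * ((√t)⁻¹ * exp (-(b ^ 2 * t)))) t := by
  refine ((hasDerivAt_erf (b * √t)).comp t ((hasDerivAt_sqrt ht.ne').const_mul b)).congr_deriv ?_
  rw [mul_pow, sq_sqrt ht.le]
  field_simp

lemma integrableOn_inv_sqrt_mul_exp_neg_mul {r : ℝ} (hr : 0 < r) :
    IntegrableOn (fun t => (√t)⁻¹ * exp (-(r * t))) (Ioi 0) := by
  refine (integrableOn_rpow_mul_exp_neg_mul_rpow (s := -(1 / 2)) (p := 1) (by norm_num) one_pos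
    hr).congr_fun (fun t ht => ?_) measurableSet_Ioi
  simp only [rpow_neg (le_of_lt ht), ← sqrt_eq_rpow, rpow_one, neg_mul]

lemma integral_inv_sqrt_mul_exp_neg_mul {r : ℝ} (hr : 0 < r) :
    ∫ t in Ioi 0, (√t)⁻¹ * exp (-(r * t)) = √(π / r) := by
  have h := integral_rpow_mul_exp_neg_mul_Ioi (a := 1 / 2) one_half_pos hr
  rw [Gamma_one_half_eq, ← sqrt_eq_rpow] at h
  rw [show π / r = 1 / r * π by ring, sqrt_mul (by positivity), ← h]
  refine setIntegral_congr_fun measurableSet_Ioi fun t ht => ?_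
  rw [show (1 / 2 : ℝ) - 1 = -(1 / 2) by norm_num, rpow_neg (le_of_lt ht), ← sqrt_eq_rpow]

lemma integrableOn_exp_neg_mul_mul_erf_comp {s : ℝ} (hs : 0 < s) {f : ℝ → ℝ}
    (hf : Continuous f) : IntegrableOn (fun t => exp (-(s * t)) * erf (f t)) (Ioi 0) := by
  refine Integrable.mono' (exp_neg_integrableOn_Ioi 0 hs) (by fun_prop) (ae_of_all _ fun t => ?_)
  rw [norm_mul, norm_of_nonneg (exp_pos _).le, neg_mul]
  exact mul_le_of_le_one_right (exp_pos _).le (abs_erf_le_one _)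

lemma tendsto_exp_neg_mul_mul_erf_comp_atTop {s : ℝ} (hs : 0 < s) (f : ℝ → ℝ) :
    Tendsto (fun t => exp (-(s * t)) * erf (f t)) atTop (𝓝 0) :=
  (tendsto_exp_neg_atTop_nhds_zero.comp (tendsto_id.const_mul_atTop hs)).zero_mul_isBoundedUnder_le
    (isBoundedUnder_of ⟨1, fun t => abs_erf_le_one (f t)⟩)

theorem integral_exp_neg_mul_mul_erf_mul_sqrt {s : ℝ} (hs : 0 < s) (b : ℝ) :
    ∫ t in Ioi 0, exp (-(s * t)) * erf (b * √t) = b / (s * √(s + b ^ 2)) := by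
  have hsb : 0 < s + b ^ 2 := by positivity
  set F : ℝ → ℝ := fun t => exp (-(s * t)) * erf (b * √t)
  set g : ℝ → ℝ := fun t => b / (s * √π) * ((√t)⁻¹ * exp (-((s + b ^ 2) * t)))
  have hderiv : ∀ t ∈ Ioi 0, HasDerivAt (fun t => -F t / s) (F t - g t) t := by
    intro t ht
    refine ((((hasDerivAt_id t).const_mul s).neg.exp.mul
      (hasDerivAt_erf_mul_sqrt b ht)).neg.div_const s).congr_deriv ?_
    have : exp (-((s + b ^ 2) * t)) = exp (-(s * t)) * exp (-(b ^ 2 * t)) := by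
      rw [← exp_add]; ring_nf
    simp only [F, g, this, Pi.neg_apply, id]
    field_simp
    ring
  have hF : IntegrableOn F (Ioi 0) := integrableOn_exp_neg_mul_mul_erf_comp hs (by fun_prop)
  have hg : IntegrableOn g (Ioi 0) := (integrableOn_inv_sqrt_mul_exp_neg_mul hsb).const_mul _
  have hFTC := integral_Ioi_of_hasDerivAt_of_tendsto (by fun_prop) hderiv (hF.sub hg)
    ((tendsto_exp_neg_mul_mul_erf_comp_atTop hs _).neg.div_const s)
  simp only [F, sqrt_zero, mul_zero, erf_zero, neg_zero, zero_div, sub_zero] at hFTC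
  rw [integral_sub hF hg, sub_eq_zero] at hFTC
  rw [hFTC, integral_const_mul, integral_inv_sqrt_mul_exp_neg_mul hsb, sqrt_div' _ hsb.le]
  have : 0 < √π := sqrt_pos.2 pi_pos
  field_simp

lemma rpow_div_two_eq_sqrt_rpow {x : ℝ} (hx : 0 ≤ x) (p : ℝ) : x ^ (p / 2) = √(x ^ p) := by
  rw [sqrt_eq_rpow, ← rpow_mul hx, mul_one_div]

theorem integral_rpow_mul_exp_neg_mul_erf {p a y : ℝ} (hp : 0 < p) (ha : 0 ≤ a) (hy : 0 < y) :
    ∫ x in Ioi 0, x ^ (p - 1) * exp (-(x ^ p * y ^ p)) * erf (a ^ (p / 2) * x ^ (p / 2))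
      = (1 / p) * a ^ (p / 2) * y ^ (-p) * (y ^ p + a ^ p) ^ (-(1 : ℝ) / 2) := by
  have hyp : 0 < y ^ p := rpow_pos_of_pos hy p
  have hsub := integral_comp_rpow_Ioi_of_pos hp
    (g := fun t => exp (-(y ^ p * t)) * erf (a ^ (p / 2) * √t))
  have hb : (a ^ (p / 2)) ^ 2 = a ^ p := by
    rw [rpow_div_two_eq_sqrt_rpow ha, sq_sqrt (rpow_nonneg ha p)]
  rw [integral_exp_neg_mul_mul_erf_mul_sqrt hyp, hb] at hsub
  calc ∫ x in Ioi 0, x ^ (p - 1) * exp (-(x ^ p * y ^ p)) * erf (a ^ (p / 2) * x ^ (p / 2))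
      = ∫ x in Ioi 0, (1 / p) * ((p * x ^ (p - 1)) •
          (exp (-(y ^ p * x ^ p)) * erf (a ^ (p / 2) * √(x ^ p)))) := by
        refine setIntegral_congr_fun measurableSet_Ioi fun x hx => ?_
        rw [smul_eq_mul, ← rpow_div_two_eq_sqrt_rpow (le_of_lt hx), mul_comm (y ^ p)]
        field_simp
    _ = (1 / p) * a ^ (p / 2) * y ^ (-p) * (y ^ p + a ^ p) ^ (-(1 : ℝ) / 2) := by
        rw [integral_const_mul, hsub, rpow_neg hy.le, neg_div, rpow_neg (by positivity),
          ← sqrt_eq_rpow]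
        ring

/-- For `n = 2^k`, `a > 0` and `y > 0`,
`Lₙ{erf(a^{n/2} x^{n/2}); y} = (1/n) a^{n/2} y^{-n} (yⁿ + aⁿ)^{-1/2}`. -/
theorem Ln_erf (k n : ℕ) (hn : n = 2 ^ k) (a y : ℝ) (ha : 0 < a) (hy : 0 < y) :
    ∫ x in Ioi (0 : ℝ), x ^ (n - 1) * Real.exp (-(x ^ n * y ^ n)) *
        erf (a ^ ((n : ℝ) / 2) * x ^ ((n : ℝ) / 2))
      = (1 / n) * a ^ ((n : ℝ) / 2) * y ^ (-(n : ℝ)) * (y ^ n + a ^ n) ^ (-(1 : ℝ) / 2) := by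
  have hn_pos : 0 < n := hn ▸ Nat.two_pow_pos k
  simpa only [← Nat.cast_pred hn_pos, rpow_natCast] using
    integral_rpow_mul_exp_neg_mul_erf (p := n) (by positivity) ha.le hy
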